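/- arXiv:2006.14562 — 5 statements merged into one kernel-verified Lean document; each statement's English description precedes it below -/
import Mathlib

section
/- Let h ≥ 2, let (W_i)_{i=0}^{h-1} be a partition of the nonnegative integers into nonempty pairwise disjoint sets, let (g_i)_{i=0}^∞ be a G-adic sequence, and let A = ⋃_{i=0}^{h-1} A_G(W_i). Then every positive integer n can be written as a sum of ℓ elements of A for some integer ℓ with 1 ≤ ℓ ≤ h. -/
open Finset

/-- A `𝒢`-adic sequence: strictly increasing, `g 0 = 1`, and `g i ∣ g (i+1)` for all `i`. -/
def GadicSeq (g : ℕ → ℕ) : Prop :=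
  StrictMono g ∧ g 0 = 1 ∧ ∀ i, g i ∣ g (i + 1)

/-- The set `A_𝒢(W)` of positive integers `∑_{j ∈ F} x j * g j` with `F` a nonempty finite
subset of `W` and `x j ∈ [1, d_{j+1} - 1]` where `d_{j+1} = g (j+1) / g j`. -/
def AG (g : ℕ → ℕ) (W : Set ℕ) : Set ℕ :=
  { n | ∃ (F : Finset ℕ) (x : ℕ → ℕ), F.Nonempty ∧ ↑F ⊆ W ∧
        (∀ j ∈ F, 1 ≤ x j ∧ x j ≤ g (j + 1) / g j - 1) ∧
        n = ∑ j ∈ F, x j * g j }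

/-- `n` is a sum of `h` (not necessarily distinct) elements of `A`. -/
def IsSumOf (A : Set ℕ) (h n : ℕ) : Prop :=
  ∃ f : Fin h → ℕ, (∀ i, f i ∈ A) ∧ n = ∑ i, f i

/-- `A` is an asymptotic basis of order `h`. -/
def AsympBasis (h : ℕ) (A : Set ℕ) : Prop :=
  ∃ N, ∀ n ≥ N, IsSumOf A h n

/-- `A` is a minimal asymptotic basis of order `h`. -/
def MinAsympBasis (h : ℕ) (A : Set ℕ) : Prop :=
  AsympBasis h A ∧ ∀ B ⊂ A, ¬ AsympBasis h B

/-!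
Write `n < g k` in mixed radix: `n = ∑_{j<k} c_j g_j` with digits `0 ≤ c_j < g (j+1) / g j`,
so that `n ∈ A_𝒢(ℕ)`. Assigning each index `j` to one part `W_i` containing it splits the nonzero
digits into at most `h` nonempty blocks, and each block sums to an element of `A_𝒢(W_i)`.
-/

/-- The `j`-th digit of `n` in the mixed radix system with place values `g`. -/
def gadicDigit (g : ℕ → ℕ) (n j : ℕ) : ℕ :=
  n % g (j + 1) / g j

theorem mod_eq_sum_gadicDigit {g : ℕ → ℕ} (h0 : g 0 = 1) (hdvd : ∀ i, g i ∣ g (i + 1))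
    (n k : ℕ) : n % g k = ∑ j ∈ range k, gadicDigit g n j * g j := by
  induction k with
  | zero => simp [h0, Nat.mod_one]
  | succ k ih =>
    rw [sum_range_succ, ← ih, gadicDigit, ← Nat.mod_mod_of_dvd n (hdvd k), mul_comm]
    exact (Nat.mod_add_div _ _).symm

theorem gadicDigit_lt {g : ℕ → ℕ} {j : ℕ} (hdvd : g j ∣ g (j + 1)) (hpos : 0 < g (j + 1))
    (n : ℕ) : gadicDigit g n j < g (j + 1) / g j :=
  Nat.div_lt_div_of_lt_of_dvd hdvd (Nat.mod_lt n hpos)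

theorem mem_AG_of_sum {g : ℕ → ℕ} {W : Set ℕ} {F : Finset ℕ} {x : ℕ → ℕ} (hF : F.Nonempty)
    (hFW : ↑F ⊆ W) (hx : ∀ j ∈ F, 1 ≤ x j ∧ x j ≤ g (j + 1) / g j - 1) :
    ∑ j ∈ F, x j * g j ∈ AG g W :=
  ⟨F, x, hF, hFW, hx, rfl⟩

theorem GadicSeq.mem_AG_univ {g : ℕ → ℕ} (hg : GadicSeq g) {n : ℕ} (hn : 0 < n) :
    n ∈ AG g Set.univ := by
  obtain ⟨hmono, h0, hdvd⟩ := hg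
  have hlt : n < g (n + 1) := Nat.lt_of_lt_of_le n.lt_succ_self hmono.le_apply
  have hpos : ∀ j, 0 < g (j + 1) := fun j => (Nat.zero_le _).trans_lt (hmono j.lt_succ_self)
  set F := (range (n + 1)).filter (gadicDigit g n · ≠ 0)
  have hsum : ∑ j ∈ F, gadicDigit g n j * g j = n := by
    rw [sum_filter_of_ne fun j _ h => left_ne_zero_of_mul h, ← mod_eq_sum_gadicDigit h0 hdvd,
      Nat.mod_eq_of_lt hlt]
  rw [← hsum]
  refine mem_AG_of_sum (nonempty_of_sum_ne_zero (hsum ▸ hn.ne')) (Set.subset_univ _) ?_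
  intro j hj
  have hlt_radix := gadicDigit_lt (hdvd j) (hpos j) n
  have hne := (mem_filter.1 hj).2
  omega

theorem isSumOf_card_of_forall_mem {ι : Type*} {A : Set ℕ} {S : Finset ι} {f : ι → ℕ}
    (hf : ∀ i ∈ S, f i ∈ A) : IsSumOf A S.card (∑ i ∈ S, f i) :=
  ⟨fun t => f (S.equivFin.symm t), fun t => hf _ (S.equivFin.symm t).2,
    by rw [← sum_coe_sort S f]; exact (Equiv.sum_comp S.equivFin.symm (f ·)).symm⟩

theorem exists_isSumOf_iUnion_AG {ι : Type*} [Fintype ι] [DecidableEq ι] {g : ℕ → ℕ}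
    {V : ι → Set ℕ} {W : Set ℕ} (σ : ℕ → ι) (hσ : ∀ j ∈ W, j ∈ V (σ j)) {n : ℕ}
    (hn : n ∈ AG g W) :
    ∃ ℓ, 1 ≤ ℓ ∧ ℓ ≤ Fintype.card ι ∧ IsSumOf (⋃ i, AG g (V i)) ℓ n := by
  obtain ⟨F, x, hF, hFW, hx, rfl⟩ := hn
  refine ⟨(F.image σ).card, (hF.image σ).card_pos, card_le_univ _, ?_⟩
  rw [← sum_fiberwise_of_maps_to fun j hj => mem_image_of_mem σ hj]
  refine isSumOf_card_of_forall_mem fun i hi => Set.mem_iUnion.2 ⟨i, mem_AG_of_sum ?_ ?_ ?_⟩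
  · obtain ⟨j, hj, rfl⟩ := mem_image.1 hi
    exact ⟨j, mem_filter.2 ⟨hj, rfl⟩⟩
  · intro j hj
    obtain ⟨hjF, rfl⟩ := mem_filter.1 hj
    exact hσ j (hFW hjF)
  · exact fun j hj => hx j (mem_filter.1 hj).1

theorem gadic_sum_of_at_most_h_general (h : ℕ) (g : ℕ → ℕ) (hg : GadicSeq g)
    (W : Fin h → Set ℕ)
    (hW3 : ⋃ i, W i = Set.univ)
    (n : ℕ) (hn : 0 < n) :
    ∃ ℓ, 1 ≤ ℓ ∧ ℓ ≤ h ∧ IsSumOf (⋃ i, AG g (W i)) ℓ n := by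
  choose σ hσ using fun j => Set.mem_iUnion.1 (hW3.symm ▸ Set.mem_univ j : j ∈ ⋃ i, W i)
  simpa using exists_isSumOf_iUnion_AG σ (fun j _ => hσ j) (hg.mem_AG_univ hn)

theorem gadic_sum_of_at_most_h (h : ℕ) (hh : 2 ≤ h) (g : ℕ → ℕ) (hg : GadicSeq g)
    (W : Fin h → Set ℕ) (hW1 : ∀ i, (W i).Nonempty)
    (hW2 : ∀ i j, i ≠ j → Disjoint (W i) (W j))
    (hW3 : ⋃ i, W i = Set.univ)
    (n : ℕ) (hn : 0 < n) :
    ∃ ℓ, 1 ≤ ℓ ∧ ℓ ≤ h ∧ IsSumOf (⋃ i, AG g (W i)) ℓ n :=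
  gadic_sum_of_at_most_h_general h g hg W hW3 n hn
end

section
/- Let h ≥ 2, let (W_i)_{i=0}^{h-1} be a partition of the nonnegative integers into nonempty pairwise disjoint sets, let (g_i)_{i=0}^∞ be a G-adic sequence, and let A = ⋃_{i=0}^{h-1} A_G(W_i). If n ≥ h and n is a sum of ℓ elements of A for some ℓ with 1 ≤ ℓ < h, then n is also a sum of ℓ+1 elements of A. -/
/-!
An element of `A = ⋃ i, A_G(W_i)` that is at least `2` is a sum of two elements of `A`: a
representation with two or more digits splits off one digit, a digit `x ≥ 2` splits as
`1 + (x - 1)`, and a lone digit `1` at position `m + 1` is `g (m + 1) = g m + (d_{m+1} - 1) g m`,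
where `m` lies in some `W_i` because the `W_i` cover `ℕ`. A sum of `ℓ < n` elements of `A`
has a summand `≥ 2`, and splitting it gives `ℓ + 1` summands.
-/

open Finset

theorem IsSumOf.succ_of_eq_add {A : Set ℕ} {ℓ n : ℕ} {f : Fin ℓ → ℕ} (hf : ∀ i, f i ∈ A)
    (hn : n = ∑ i, f i) {k : Fin ℓ} {b c : ℕ} (hb : b ∈ A) (hc : c ∈ A) (hk : f k = b + c) :
    IsSumOf A (ℓ + 1) n := by
  refine ⟨Fin.cons b (Function.update f k c), Fin.forall_fin_succ.2 ⟨hb, fun i => ?_⟩, ?_⟩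
  · rcases eq_or_ne i k with rfl | hik
    · simpa using hc
    · simpa [Function.update_of_ne hik] using hf i
  · rw [Fin.sum_cons, sum_update_of_mem (mem_univ k), hn,
      sum_eq_add_sum_sdiff_singleton_of_mem (mem_univ k), hk, add_assoc]

theorem IsSumOf.succ {A : Set ℕ} {ℓ n : ℕ}
    (hsplit : ∀ a ∈ A, 2 ≤ a → ∃ b ∈ A, ∃ c ∈ A, a = b + c)
    (hℓn : ℓ < n) (hs : IsSumOf A ℓ n) : IsSumOf A (ℓ + 1) n := by
  obtain ⟨f, hf, hn⟩ := hs
  obtain ⟨k, hk⟩ : ∃ k, 2 ≤ f k := by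
    by_contra! hsmall
    have : ∑ i, f i ≤ ℓ := by
      simpa using sum_le_card_nsmul univ f 1 fun i _ => Nat.le_of_lt_succ (hsmall i)
    omega
  obtain ⟨b, hb, c, hc, hbc⟩ := hsplit (f k) (hf k) hk
  exact IsSumOf.succ_of_eq_add hf hn hb hc hbc

namespace GadicSeq

variable {g : ℕ → ℕ} (hg : GadicSeq g)
include hg

theorem one_le (j : ℕ) : 1 ≤ g j :=
  hg.2.1 ▸ hg.1.monotone (Nat.zero_le j)

theorem two_le_div (m : ℕ) : 2 ≤ g (m + 1) / g m := by
  obtain ⟨d, hd⟩ := hg.2.2 m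
  have hlt : g m < g (m + 1) := hg.1 (Nat.lt_succ_self m)
  have := hg.one_le m
  rw [hd, Nat.mul_div_cancel_left _ (by omega)]
  by_contra!
  interval_cases d <;> omega

theorem succ_eq_add (m : ℕ) : g (m + 1) = 1 * g m + (g (m + 1) / g m - 1) * g m := by
  have := hg.two_le_div m
  rw [← add_mul, Nat.add_sub_cancel' (by omega), Nat.div_mul_cancel (hg.2.2 m)]

end GadicSeq

theorem mul_mem_AG {g : ℕ → ℕ} {W : Set ℕ} {j c : ℕ} (hj : j ∈ W) (hc1 : 1 ≤ c)
    (hc : c ≤ g (j + 1) / g j - 1) : c * g j ∈ AG g W :=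
  ⟨{j}, fun _ => c, singleton_nonempty j, by simpa using hj, by simp [hc1, hc], by simp⟩

theorem exists_add_of_mem_AG {g : ℕ → ℕ} {W : Set ℕ} {a : ℕ} (hg : GadicSeq g)
    (ha : a ∈ AG g W) (h2 : 2 ≤ a) :
    (∃ b ∈ AG g W, ∃ c ∈ AG g W, a = b + c) ∨ ∃ m, a = g (m + 1) := by
  obtain ⟨F, x, ⟨y, hy⟩, hFW, hx, rfl⟩ := ha
  rcases F.eq_singleton_or_nontrivial hy with rfl | ⟨u, hu, v, hv, huv⟩
  · have hyW : y ∈ W := hFW (mem_singleton_self y)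
    obtain ⟨hxy1, hxy⟩ := hx y (mem_singleton_self y)
    rw [sum_singleton] at h2 ⊢
    by_cases hx2 : 2 ≤ x y
    · refine .inl ⟨1 * g y, mul_mem_AG hyW le_rfl (by omega),
        (x y - 1) * g y, mul_mem_AG hyW (by omega) (by omega), ?_⟩
      rw [← add_mul]
      congr 1
      omega
    · obtain _ | m := y
      · rw [hg.2.1] at h2
        omega
      · exact .inr ⟨m, by rw [show x (m + 1) = 1 by omega, one_mul]⟩
  · refine .inl ⟨x u * g u, mul_mem_AG (hFW hu) (hx u hu).1 (hx u hu).2,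
      ∑ j ∈ F.erase u, x j * g j, ⟨F.erase u, x, ⟨v, mem_erase.2 ⟨huv.symm, hv⟩⟩,
        fun j hj => hFW (erase_subset u F hj), fun j hj => hx j (erase_subset u F hj), rfl⟩,
      (add_sum_erase F _ hu).symm⟩

theorem exists_add_of_mem_iUnion_AG {ι : Type*} {g : ℕ → ℕ} {W : ι → Set ℕ} (hg : GadicSeq g)
    (hW : ⋃ i, W i = Set.univ) {a : ℕ} (ha : a ∈ ⋃ i, AG g (W i)) (h2 : 2 ≤ a) :
    ∃ b ∈ ⋃ i, AG g (W i), ∃ c ∈ ⋃ i, AG g (W i), a = b + c := by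
  obtain ⟨i, ha⟩ := Set.mem_iUnion.1 ha
  rcases exists_add_of_mem_AG hg ha h2 with ⟨b, hb, c, hc, rfl⟩ | ⟨m, rfl⟩
  · exact ⟨b, Set.mem_iUnion.2 ⟨i, hb⟩, c, Set.mem_iUnion.2 ⟨i, hc⟩, rfl⟩
  · obtain ⟨i', hm⟩ := Set.iUnion_eq_univ_iff.1 hW m
    have := hg.two_le_div m
    exact ⟨_, Set.mem_iUnion.2 ⟨i', mul_mem_AG hm le_rfl (by omega)⟩,
      _, Set.mem_iUnion.2 ⟨i', mul_mem_AG hm (by omega) le_rfl⟩, hg.succ_eq_add m⟩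

theorem gadic_sum_lengthen_general (h : ℕ) (g : ℕ → ℕ) (hg : GadicSeq g)
    (W : Fin h → Set ℕ)
    (hW3 : ⋃ i, W i = Set.univ)
    (n : ℕ) (hn : h ≤ n) (ℓ : ℕ) (hℓ2 : ℓ < h)
    (hsum : IsSumOf (⋃ i, AG g (W i)) ℓ n) :
    IsSumOf (⋃ i, AG g (W i)) (ℓ + 1) n :=
  hsum.succ (fun _ ha h2 => exists_add_of_mem_iUnion_AG hg hW3 ha h2) (hℓ2.trans_le hn)

theorem gadic_sum_lengthen (h : ℕ) (hh : 2 ≤ h) (g : ℕ → ℕ) (hg : GadicSeq g)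
    (W : Fin h → Set ℕ) (hW1 : ∀ i, (W i).Nonempty)
    (hW2 : ∀ i j, i ≠ j → Disjoint (W i) (W j))
    (hW3 : ⋃ i, W i = Set.univ)
    (n : ℕ) (hn : h ≤ n) (ℓ : ℕ) (hℓ1 : 1 ≤ ℓ) (hℓ2 : ℓ < h)
    (hsum : IsSumOf (⋃ i, AG g (W i)) ℓ n) :
    IsSumOf (⋃ i, AG g (W i)) (ℓ + 1) n :=
  gadic_sum_lengthen_general h g hg W hW3 n hn ℓ hℓ2 hsum
end

section
/- Let h ≥ 2, let (W_i)_{i=0}^{h-1} be a partition of the nonnegative integers into nonempty pairwise disjoint sets, and let (g_i)_{i=0}^∞ be a G-adic sequence. Then the set A = {0} ∪ ⋃_{i=0}^{h-1} A_G(W_i) is a basis of order h; that is, every nonnegative integer is a sum of h not necessarily distinct elements of A. -/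
open Finset

namespace GadicSeq

variable {g : ℕ → ℕ}

lemma pos (hg : GadicSeq g) (i : ℕ) : 0 < g i :=
  Nat.lt_of_lt_of_le (hg.2.1 ▸ Nat.one_pos) (hg.1.monotone (Nat.zero_le i))

lemma gadicDigit_lt (hg : GadicSeq g) (n j : ℕ) : gadicDigit g n j < g (j + 1) / g j := by
  rw [gadicDigit, Nat.div_lt_iff_lt_mul (hg.pos j), Nat.div_mul_cancel (hg.2.2 j)]
  exact Nat.mod_lt n (hg.pos (j + 1))

lemma sum_gadicDigit_mul (hg : GadicSeq g) (n K : ℕ) :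
    ∑ j ∈ range K, gadicDigit g n j * g j = n % g K := by
  induction K with
  | zero => rw [hg.2.1, Nat.mod_one, sum_range_zero]
  | succ K ih =>
    rw [sum_range_succ, ih, gadicDigit, mul_comm, ← Nat.mod_mod_of_dvd n (hg.2.2 K)]
    exact Nat.mod_add_div _ _

lemma exists_digit_expansion (hg : GadicSeq g) (n : ℕ) :
    ∃ (F : Finset ℕ) (x : ℕ → ℕ), (∀ j ∈ F, 1 ≤ x j ∧ x j ≤ g (j + 1) / g j - 1) ∧
      n = ∑ j ∈ F, x j * g j := by
  refine ⟨(range (n + 1)).filter (gadicDigit g n · ≠ 0), gadicDigit g n, fun j hj => ?_, ?_⟩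
  · have := hg.gadicDigit_lt n j
    have := (mem_filter.mp hj).2
    omega
  · have hn : n < g (n + 1) := Nat.lt_of_lt_of_le n.lt_succ_self hg.1.le_apply
    rw [sum_filter_of_ne fun j _ hj => left_ne_zero_of_mul hj, hg.sum_gadicDigit_mul,
      Nat.mod_eq_of_lt hn]

end GadicSeq

lemma sum_mem_zero_union_AG {g x : ℕ → ℕ} {W : Set ℕ} {F : Finset ℕ} (hFW : ↑F ⊆ W)
    (hx : ∀ j ∈ F, 1 ≤ x j ∧ x j ≤ g (j + 1) / g j - 1) :
    ∑ j ∈ F, x j * g j ∈ {0} ∪ AG g W := by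
  rcases F.eq_empty_or_nonempty with rfl | hF
  · exact Or.inl rfl
  · exact Or.inr ⟨F, x, hF, hFW, hx, rfl⟩

theorem gadic_basis_with_zero_general (h : ℕ) (g : ℕ → ℕ) (hg : GadicSeq g)
    (W : Fin h → Set ℕ)
    (hW3 : ⋃ i, W i = Set.univ)
    (n : ℕ) :
    IsSumOf ({0} ∪ ⋃ i, AG g (W i)) h n := by
  classical
  obtain ⟨F, x, hx, rfl⟩ := hg.exists_digit_expansion n
  choose part hpart using fun j => Set.mem_iUnion.mp (hW3 ▸ Set.mem_univ j)
  refine ⟨fun i => ∑ j ∈ F with part j = i, x j * g j, fun i => ?_,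
    (sum_fiberwise F part _).symm⟩
  have hpiece : ↑(F.filter (part · = i)) ⊆ W i := fun j hj =>
    (mem_filter.mp hj).2 ▸ hpart j
  exact Set.union_subset_union_right _ (Set.subset_iUnion (fun i => AG g (W i)) i)
    (sum_mem_zero_union_AG hpiece fun j hj => hx j (mem_filter.mp hj).1)

theorem gadic_basis_with_zero (h : ℕ) (hh : 2 ≤ h) (g : ℕ → ℕ) (hg : GadicSeq g)
    (W : Fin h → Set ℕ) (hW1 : ∀ i, (W i).Nonempty)
    (hW2 : ∀ i j, i ≠ j → Disjoint (W i) (W j))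
    (hW3 : ⋃ i, W i = Set.univ)
    (n : ℕ) :
    IsSumOf ({0} ∪ ⋃ i, AG g (W i)) h n :=
  gadic_basis_with_zero_general h g hg W hW3 n
end

section
/- Let (g_i)_{i=0}^∞ be a G-adic sequence with quotients d_i = g_i/g_{i-1}. Let (u_i)_{i=1}^p be a strictly increasing finite sequence of nonnegative integers and let (v_j)_{j=1}^q be a finite sequence of not necessarily distinct nonnegative integers, with x_i ∈ [1, d_{u_i+1}−1] for all i ∈ [1,p] and y_j ∈ [1, d_{v_j+1}−1] for all j ∈ [1,q]. If Σ_{i=1}^p x_i g_{u_i} = Σ_{j=1}^q y_j g_{v_j}, then for every k ∈ [1,p], the difference Σ_{i : u_i ≤ u_k} x_i g_{u_i} − Σ_{j : v_j ≤ u_k} y_j g_{v_j} is divisible by g_{u_k + 1}. -/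
open Finset

/- Every term `y * g v` with `v > u k` is divisible by `g (u k + 1)`, so each partial sum is
congruent to its full sum modulo `g (u k + 1)`, and the two full sums are equal. -/

theorem dvd_of_le_of_forall_dvd_succ {M : Type*} [Monoid M] {g : ℕ → M}
    (hg : ∀ i, g i ∣ g (i + 1)) {a b : ℕ} (hab : a ≤ b) : g a ∣ g b :=
  Nat.le_induction dvd_rfl (fun n _ ih => ih.trans (hg n)) b hab

section DivisibilityChain

variable {ι R : Type*} (s : Finset ι) (w : ι → ℕ) (m : ℕ)

theorem dvd_sum_filter_not_le [CommSemiring R] {g : ℕ → R} (hg : ∀ i, g i ∣ g (i + 1))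
    (z : ι → R) :
    g (m + 1) ∣ ∑ j ∈ s with ¬ w j ≤ m, z j * g (w j) :=
  dvd_sum fun _ hj =>
    (dvd_of_le_of_forall_dvd_succ hg (not_le.mp (mem_filter.mp hj).2)).mul_left _

theorem dvd_sum_sub_sum_filter_le [CommRing R] {g : ℕ → R} (hg : ∀ i, g i ∣ g (i + 1))
    (z : ι → R) :
    g (m + 1) ∣ ∑ j ∈ s, z j * g (w j) - ∑ j ∈ s with w j ≤ m, z j * g (w j) := by
  rw [← sum_filter_add_sum_filter_not s (fun j => w j ≤ m), add_sub_cancel_left]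
  exact dvd_sum_filter_not_le s w m hg z

end DivisibilityChain

theorem gadic_partial_sums_congruence_general (g : ℕ → ℕ) (hg : GadicSeq g)
    (p q : ℕ) (u v x y : ℕ → ℕ)
    (heq : ∑ i ∈ Finset.Icc 1 p, x i * g (u i) = ∑ j ∈ Finset.Icc 1 q, y j * g (v j)) :
    ∀ k ∈ Finset.Icc 1 p,
      (g (u k + 1) : ℤ) ∣
        (∑ i ∈ (Finset.Icc 1 p).filter (fun i => u i ≤ u k), (x i : ℤ) * g (u i)) -
          ∑ j ∈ (Finset.Icc 1 q).filter (fun j => v j ≤ u k), (y j : ℤ) * g (v j) := by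
  intro k _
  have hgZ : ∀ i, (g i : ℤ) ∣ g (i + 1) := fun i => Int.natCast_dvd_natCast.mpr (hg.2.2 i)
  have heqZ : ∑ i ∈ Icc 1 p, (x i : ℤ) * g (u i) = ∑ j ∈ Icc 1 q, (y j : ℤ) * g (v j) := by
    exact_mod_cast heq
  have hx := dvd_sum_sub_sum_filter_le (Icc 1 p) u (u k) hgZ (fun i => (x i : ℤ))
  have hy := dvd_sum_sub_sum_filter_le (Icc 1 q) v (u k) hgZ (fun j => (y j : ℤ))
  rw [heqZ] at hx
  simpa only [sub_sub_sub_cancel_left] using dvd_sub hy hx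

theorem gadic_partial_sums_congruence (g : ℕ → ℕ) (hg : GadicSeq g)
    (p q : ℕ) (u v x y : ℕ → ℕ)
    (hu : ∀ i j, 1 ≤ i → i < j → j ≤ p → u i < u j)
    (hx : ∀ i ∈ Finset.Icc 1 p, 1 ≤ x i ∧ x i ≤ g (u i + 1) / g (u i) - 1)
    (hy : ∀ j ∈ Finset.Icc 1 q, 1 ≤ y j ∧ y j ≤ g (v j + 1) / g (v j) - 1)
    (heq : ∑ i ∈ Finset.Icc 1 p, x i * g (u i) = ∑ j ∈ Finset.Icc 1 q, y j * g (v j)) :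
    ∀ k ∈ Finset.Icc 1 p,
      (g (u k + 1) : ℤ) ∣
        (∑ i ∈ (Finset.Icc 1 p).filter (fun i => u i ≤ u k), (x i : ℤ) * g (u i)) -
          ∑ j ∈ (Finset.Icc 1 q).filter (fun j => v j ≤ u k), (y j : ℤ) * g (v j) :=
  gadic_partial_sums_congruence_general g hg p q u v x y heq
end

section
/- Let (g_i)_{i=0}^∞ be a G-adic sequence with quotients d_i = g_i/g_{i-1}. Let (u_i)_{i=1}^p be a strictly increasing finite sequence of nonnegative integers and let (v_j)_{j=1}^q be a finite sequence of not necessarily distinct nonnegative integers, with x_i ∈ [1, d_{u_i+1}−1] for all i ∈ [1,p] and y_j ∈ [1, d_{v_j+1}−1] for all j ∈ [1,q]. If Σ_{i=1}^p x_i g_{u_i} = Σ_{j=1}^q y_j g_{v_j}, then for every k ∈ [1,p], Σ_{i : u_i ≤ u_k} x_i g_{u_i} ≤ Σ_{j : v_j ≤ u_k} y_j g_{v_j}. -/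
/-!
Cut both sums at level `m = u k`. The parts above `m` are multiples of `g (m + 1)`. Up to `m`,
the left side has distinct positions and admissible digits, so it is bounded by the telescoping
sum `∑_{t ≤ m} (g (t + 1) - g t) < g (m + 1)`. It is therefore its own residue modulo
`g (m + 1)`, which is also the residue of the right side up to `m`, and a residue is at most
the number itself.
-/

open Finset

theorem Nat.mul_le_sub_of_le_div_sub_one {a b c : ℕ} (h : c ≤ b / a - 1) : c * a ≤ b - a :=
  calc c * a ≤ (b / a - 1) * a := Nat.mul_le_mul_right a h
    _ = b / a * a - a := by rw [Nat.sub_mul, one_mul]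
    _ ≤ b - a := Nat.sub_le_sub_right (Nat.div_mul_le_self b a) a

theorem Nat.le_of_add_eq_add_of_dvd {d L R a b : ℕ} (hL : L < d) (ha : d ∣ a) (hb : d ∣ b)
    (h : L + a = R + b) : L ≤ R := by
  obtain ⟨a, rfl⟩ := ha
  obtain ⟨b, rfl⟩ := hb
  calc L = (L + d * a) % d := by rw [Nat.add_mul_mod_self_left, Nat.mod_eq_of_lt hL]
    _ = R % d := by rw [h, Nat.add_mul_mod_self_left]
    _ ≤ R := Nat.mod_le R d

namespace GadicSeq

variable {g : ℕ → ℕ}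

theorem dvd_of_le (hg : GadicSeq g) {a b : ℕ} (hab : a ≤ b) : g a ∣ g b := by
  induction b, hab using Nat.le_induction with
  | base => exact dvd_rfl
  | succ n _ ih => exact ih.trans (hg.2.2 n)

theorem dvd_sum_of_le (hg : GadicSeq g) {ι : Type*} {s : Finset ι} {f c : ι → ℕ} {n : ℕ}
    (hf : ∀ i ∈ s, n ≤ f i) : g n ∣ ∑ i ∈ s, c i * g (f i) :=
  Finset.dvd_sum fun i hi => (hg.dvd_of_le (hf i hi)).mul_left (c i)

theorem sum_lt_of_injOn (hg : GadicSeq g) {ι : Type*} {s : Finset ι} {f c : ι → ℕ} {n : ℕ}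
    (hinj : Set.InjOn f s) (hf : ∀ i ∈ s, f i < n)
    (hc : ∀ i ∈ s, c i ≤ g (f i + 1) / g (f i) - 1) : ∑ i ∈ s, c i * g (f i) < g n := by
  have himage : s.image f ⊆ range n := by
    intro t ht
    obtain ⟨i, hi, rfl⟩ := mem_image.mp ht
    exact mem_range.mpr (hf i hi)
  have hg0 : 0 < g 0 := hg.2.1 ▸ Nat.one_pos
  calc ∑ i ∈ s, c i * g (f i)
      ≤ ∑ i ∈ s, (g (f i + 1) - g (f i)) :=
        sum_le_sum fun i hi => Nat.mul_le_sub_of_le_div_sub_one (hc i hi)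
    _ = ∑ t ∈ s.image f, (g (t + 1) - g t) := by rw [sum_image fun _ ha _ hb => hinj ha hb]
    _ ≤ ∑ t ∈ range n, (g (t + 1) - g t) := sum_le_sum_of_subset himage
    _ = g n - g 0 := sum_range_tsub hg.1.monotone n
    _ < g n := Nat.sub_lt (hg0.trans_le (hg.1.monotone n.zero_le)) hg0

end GadicSeq

theorem gadic_partial_sums_inequality_general (g : ℕ → ℕ) (hg : GadicSeq g)
    (p q : ℕ) (u v x y : ℕ → ℕ)
    (hu : ∀ i j, 1 ≤ i → i < j → j ≤ p → u i < u j)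
    (hx : ∀ i ∈ Finset.Icc 1 p, 1 ≤ x i ∧ x i ≤ g (u i + 1) / g (u i) - 1)
    (heq : ∑ i ∈ Finset.Icc 1 p, x i * g (u i) = ∑ j ∈ Finset.Icc 1 q, y j * g (v j)) :
    ∀ k ∈ Finset.Icc 1 p,
      ∑ i ∈ (Finset.Icc 1 p).filter (fun i => u i ≤ u k), x i * g (u i) ≤
        ∑ j ∈ (Finset.Icc 1 q).filter (fun j => v j ≤ u k), y j * g (v j) := by
  intro k _
  have hinj : Set.InjOn u (Icc 1 p : Finset ℕ) := by
    rw [coe_Icc]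
    exact StrictMonoOn.injOn fun i hi j hj hij => hu i j hi.1 hij hj.2
  refine Nat.le_of_add_eq_add_of_dvd (d := g (u k + 1)) ?_
    (hg.dvd_sum_of_le fun i hi => Nat.lt_iff_add_one_le.mp (not_le.mp (mem_filter.mp hi).2))
    (hg.dvd_sum_of_le fun j hj => Nat.lt_iff_add_one_le.mp (not_le.mp (mem_filter.mp hj).2))
    (by rw [sum_filter_add_sum_filter_not, sum_filter_add_sum_filter_not, heq])
  exact hg.sum_lt_of_injOn (hinj.mono (coe_subset.mpr (filter_subset _ _)))
    (fun i hi => Nat.lt_succ_of_le (mem_filter.mp hi).2)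
    (fun i hi => (hx i (mem_filter.mp hi).1).2)

theorem gadic_partial_sums_inequality (g : ℕ → ℕ) (hg : GadicSeq g)
    (p q : ℕ) (u v x y : ℕ → ℕ)
    (hu : ∀ i j, 1 ≤ i → i < j → j ≤ p → u i < u j)
    (hx : ∀ i ∈ Finset.Icc 1 p, 1 ≤ x i ∧ x i ≤ g (u i + 1) / g (u i) - 1)
    (hy : ∀ j ∈ Finset.Icc 1 q, 1 ≤ y j ∧ y j ≤ g (v j + 1) / g (v j) - 1)
    (heq : ∑ i ∈ Finset.Icc 1 p, x i * g (u i) = ∑ j ∈ Finset.Icc 1 q, y j * g (v j)) :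
    ∀ k ∈ Finset.Icc 1 p,
      ∑ i ∈ (Finset.Icc 1 p).filter (fun i => u i ≤ u k), x i * g (u i) ≤
        ∑ j ∈ (Finset.Icc 1 q).filter (fun j => v j ≤ u k), y j * g (v j) :=
  gadic_partial_sums_inequality_general g hg p q u v x y hu hx heq
end
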